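/- Let q⋆ be an optimal k-points NN quantizer for P with codebook c⋆ = {c⋆₁,…,c⋆_k}, let q be a k-points NN quantizer with codebook c = {c₁,…,c_k}, and set m = min_{i≠j} |c⋆_i − c⋆_j|. Assume the identity permutation attains the minimum in the definition of F₁(q⋆,q). Then for all i ≠ j, V_i(c⋆) ∩ V_j(c) ⊆ {x ∈ E : m·d(x, ∂V_i(c⋆)) ≤ 2|x − q⋆(x)|·F₁(q⋆,q) + 2F₁(q⋆,q)²}, where ∂V_i(c⋆) denotes the topological boundary of V_i(c⋆). -/

import Mathlib

open MeasureTheory Metric Set ENNReal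

noncomputable section

variable {E : Type*} [NormedAddCommGroup E] [InnerProductSpace ℝ E] [MeasurableSpace E]

/-- A `k`-points nearest-neighbor quantizer: a Borel-measurable map whose image is a set of
exactly `k` points and which maps every point to a nearest point of its codebook. -/
def IsNNQuantizer (k : ℕ) (q : E → E) : Prop :=
  Measurable q ∧ (∃ s : Finset E, s.card = k ∧ Set.range q = ↑s) ∧
    ∀ x : E, ∀ c ∈ Set.range q, ‖x - q x‖ ≤ ‖x - c‖

/-- The risk (distortion) of a quantizer with respect to `P`. -/
def risk (P : Measure E) (q : E → E) : ℝ := ∫ x, ‖x - q x‖ ^ 2 ∂P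

/-- An optimal `k`-points NN quantizer for `P`. -/
def IsOptimalQuantizer (P : Measure E) (k : ℕ) (q : E → E) : Prop :=
  IsNNQuantizer k q ∧ ∀ q', IsNNQuantizer k q' → risk P q ≤ risk P q'

/-- The absolute margin condition with parameter `l0` (with respect to the optimal quantizer
`qs`):  (1) the set `A(l0)` has full `P`-measure; (2) for every random variable `Y`
(encoded by a coupling `π` of the law `P` of `X` and the law of `Y`) with
`E|X - Y|² ≤ l0² E|X - qs X|²`, the map `q ↦ E|Y - q Y|²` over `k`-points NN quantizers has a
unique minimizer (uniqueness of its codebook). -/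
def AbsoluteMargin (P : Measure E) (k : ℕ) (qs : E → E) (l0 : ℝ) : Prop :=
  P {x | qs (x + l0 • (x - qs x)) = qs x} = 1 ∧
  ∀ π : Measure (E × E), IsProbabilityMeasure π → π.map Prod.fst = P →
    (∫ p, ‖p.1 - p.2‖ ^ 2 ∂π) ≤ l0 ^ 2 * ∫ x, ‖x - qs x‖ ^ 2 ∂P →
    ∃ q0, IsNNQuantizer k q0 ∧
      (∀ q', IsNNQuantizer k q' → risk (π.map Prod.snd) q0 ≤ risk (π.map Prod.snd) q') ∧
      ∀ q', IsNNQuantizer k q' →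
        (∀ q'', IsNNQuantizer k q'' → risk (π.map Prod.snd) q' ≤ risk (π.map Prod.snd) q'') →
        Set.range q' = Set.range q0

/-- Voronoi cell of the `j`-th point of the codebook `c`. -/
def Vcell (k : ℕ) (c : Fin k → E) (j : Fin k) : Set E := {x | ∀ l, ‖x - c j‖ ≤ ‖x - c l‖}

/-- The frontier of the Voronoi diagram generated by `c`. -/
def VorFrontier (k : ℕ) (c : Fin k → E) : Set E :=
  ⋃ (i) (j) (_ : i ≠ j), Vcell k c i ∩ Vcell k c j

/-- `F₁` between two codebooks: min over permutations of the max distance of matched centers. -/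
def F1 (k : ℕ) (c c' : Fin k → E) : ℝ :=
  ⨅ σ : Equiv.Perm (Fin k), ⨆ j, ‖c j - c' (σ j)‖

/-- `F₂` between two codebooks: the minimal `P`-mass of misclassified points. -/
def F2 (P : Measure E) (k : ℕ) (c c' : Fin k → E) : ℝ :=
  ⨅ σ : Equiv.Perm (Fin k), (P (⋃ j, Vcell k c j ∩ Vcell k c' (σ j))ᶜ).toReal

/-- `max_{i ≠ j} ‖c i - c j‖`. -/
def maxDist (k : ℕ) (c : Fin k → E) : ℝ :=
  ⨆ p : {p : Fin k × Fin k // p.1 ≠ p.2}, ‖c p.1.1 - c p.1.2‖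

/-- `min_{i ≠ j} ‖c i - c j‖`. -/
def minDist (k : ℕ) (c : Fin k → E) : ℝ :=
  ⨅ p : {p : Fin k × Fin k // p.1 ≠ p.2}, ‖c p.1.1 - c p.1.2‖

/-- The function `p⋆(t)` of Definition `def:pstar`, for the optimal codebook `cs` of the
optimal quantizer `qs`. -/
def pstar (P : Measure E) (k : ℕ) (cs : Fin k → E) (qs : E → E) (t : ℝ) : ℝ :=
  (P (⋃ i, {x | minDist k cs * infDist x (frontier (Vcell k cs i)) ≤
      2 * ‖x - qs x‖ * t + 2 * t ^ 2})).toReal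

/-- `F₁` between two quantizers, defined through enumerations of their codebooks. -/
def F1Q (k : ℕ) (q q' : E → E) : ℝ :=
  sInf {r | ∃ c c' : Fin k → E, Set.range c = Set.range q ∧ Set.range c' = Set.range q' ∧
    r = ⨆ j, ‖c j - c' j‖}

/-! A point `x` of the optimal cell of `cs i` that falls in the cell of `c j` satisfies
`‖x - cs j‖ ≤ ‖x - cs i‖ + 2δ` once the centers are matched within `δ = F₁`, so
`‖x - cs j‖² - ‖x - cs i‖² ≤ 4δ‖x - cs i‖ + 4δ²`. The cell of `cs i` lies in the half-space of
points closer to `cs i` than to `cs j`, whose bounding hyperplane is at distance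
`(‖x - cs j‖² - ‖x - cs i‖²) / (2‖cs j - cs i‖)` from `x`; a segment from `x` to a point beyond
that hyperplane crosses the frontier of the cell. It remains to bound `minDist` by
`‖cs j - cs i‖` and `‖x - cs i‖` by `‖x - qs x‖`. -/

theorem IsPreconnected.inter_frontier_nonempty {X : Type*} [TopologicalSpace X] {s t : Set X}
    (hs : IsPreconnected s) (hst : (s ∩ t).Nonempty) (hsdiff : (s \ t).Nonempty) :
    (s ∩ frontier t).Nonempty := by
  by_contra h
  have hcover : s ⊆ interior t ∪ interior tᶜ := by
    rw [← compl_frontier_eq_union_interior]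
    exact fun x hx hxt => h ⟨x, hx, hxt⟩
  obtain ⟨a, has, hat⟩ := hst
  obtain ⟨b, hbs, hbt⟩ := hsdiff
  have ha : a ∈ interior t :=
    (hcover has).resolve_right fun hint => interior_subset hint hat
  have hb : b ∈ interior tᶜ :=
    (hcover hbs).resolve_left fun hint => hbt (interior_subset hint)
  obtain ⟨x, -, hxt, hxt'⟩ :=
    hs _ _ isOpen_interior isOpen_interior hcover ⟨a, has, ha⟩ ⟨b, hbs, hb⟩
  exact interior_subset hxt' (interior_subset hxt)

section

variable {F : Type*} [NormedAddCommGroup F]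

theorem minDist_le_norm_sub {k : ℕ} (c : Fin k → F) {i j : Fin k} (hij : i ≠ j) :
    minDist k c ≤ ‖c i - c j‖ :=
  ciInf_le (f := fun p : {p : Fin k × Fin k // p.1 ≠ p.2} => ‖c p.1.1 - c p.1.2‖)
    ⟨0, by rintro _ ⟨p, rfl⟩; exact norm_nonneg _⟩ ⟨(i, j), hij⟩

theorem norm_sub_le_norm_sub_add_of_mem_Vcell {k : ℕ} {c c' : Fin k → F} {δ : ℝ}
    (hδ : ∀ l, ‖c l - c' l‖ ≤ δ) {x : F} {j : Fin k} (hx : x ∈ Vcell k c' j) (i : Fin k) :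
    ‖x - c j‖ ≤ ‖x - c i‖ + 2 * δ :=
  calc ‖x - c j‖ ≤ ‖x - c' j‖ + ‖c' j - c j‖ := norm_sub_le_norm_sub_add_norm_sub _ _ _
    _ ≤ ‖x - c' i‖ + δ := add_le_add (hx i) (norm_sub_rev (c' j) (c j) ▸ hδ j)
    _ ≤ ‖x - c i‖ + ‖c i - c' i‖ + δ := by gcongr; exact norm_sub_le_norm_sub_add_norm_sub _ _ _
    _ ≤ ‖x - c i‖ + 2 * δ := by linarith [hδ i]

variable [InnerProductSpace ℝ F]

theorem infDist_frontier_le_dist {t : Set F} {x p : F} (hx : x ∈ t) (hp : p ∉ t) :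
    infDist x (frontier t) ≤ dist x p := by
  obtain ⟨y, hy, hyt⟩ := (convex_segment x p).isPreconnected.inter_frontier_nonempty
    ⟨x, left_mem_segment ℝ x p, hx⟩ ⟨p, right_mem_segment ℝ x p, hp⟩
  calc infDist x (frontier t) ≤ dist x y := infDist_le_dist_of_mem hyt
    _ ≤ dist x y + dist y p := le_add_of_nonneg_right dist_nonneg
    _ = dist x p := dist_add_dist_of_mem_segment hy

theorem norm_sub_sq_sub_norm_sub_sq_add_smul (a b y : F) (s : ℝ) :
    ‖y + s • (b - a) - b‖ ^ 2 - ‖y + s • (b - a) - a‖ ^ 2 =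
      ‖y - b‖ ^ 2 - ‖y - a‖ ^ 2 - 2 * s * ‖b - a‖ ^ 2 := by
  have hexpand : ∀ u v : F, ‖u + (s - 1) • v‖ ^ 2 - ‖u + s • v‖ ^ 2 =
      ‖u - v‖ ^ 2 - ‖u‖ ^ 2 - 2 * s * ‖v‖ ^ 2 := by
    intro u v
    rw [norm_add_sq_real, norm_add_sq_real, norm_sub_sq_real, norm_smul, norm_smul,
      real_inner_smul_right, real_inner_smul_right, Real.norm_eq_abs, Real.norm_eq_abs, mul_pow,
      mul_pow, sq_abs, sq_abs]
    ring
  rw [show y + s • (b - a) - b = (y - a) + (s - 1) • (b - a) by module,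
    show y + s • (b - a) - a = (y - a) + s • (b - a) by module,
    show y - b = (y - a) - (b - a) by abel]
  exact hexpand _ _

theorem two_mul_norm_sub_mul_infDist_frontier_le {t : Set F} {a b x : F}
    (ht : ∀ y ∈ t, ‖y - a‖ ≤ ‖y - b‖) (hx : x ∈ t) :
    2 * ‖b - a‖ * infDist x (frontier t) ≤ ‖x - b‖ ^ 2 - ‖x - a‖ ^ 2 := by
  set w := ‖b - a‖
  set Δ := ‖x - b‖ ^ 2 - ‖x - a‖ ^ 2
  have hΔ : 0 ≤ Δ := sub_nonneg.2 (pow_le_pow_left₀ (norm_nonneg _) (ht x hx) 2)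
  rcases (norm_nonneg _ : 0 ≤ w).eq_or_lt with hw | hw
  · rw [show w = 0 from hw.symm, mul_zero, zero_mul]
    exact hΔ
  suffices infDist x (frontier t) ≤ Δ / (2 * w) by
    rwa [le_div_iff₀ (by positivity), mul_comm] at this
  refine le_of_forall_gt_imp_ge_of_dense fun r hr => ?_
  rw [div_lt_iff₀ (by positivity)] at hr
  -- `p` lies at distance `r` from `x`, beyond the hyperplane bisecting `a` and `b`
  set p := x + (r / w) • (b - a)
  have hp : p ∉ t := by
    intro hpt
    have hclose := pow_le_pow_left₀ (norm_nonneg _) (ht p hpt) 2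
    have hsq := norm_sub_sq_sub_norm_sub_sq_add_smul a b x (r / w)
    have hrw : 2 * (r / w) * w ^ 2 = r * (2 * w) := by field_simp
    linarith
  calc infDist x (frontier t) ≤ dist x p := infDist_frontier_le_dist hx hp
    _ = r := by
      have hr0 : 0 < r := pos_of_mul_pos_left (hΔ.trans_lt hr) (by positivity)
      rw [dist_eq_norm, sub_add_cancel_left, norm_neg, norm_smul, Real.norm_eq_abs,
        abs_of_pos (by positivity), div_mul_cancel₀ _ hw.ne']

end

theorem stmt19_general (k : ℕ) (qs : E → E) (cs c : Fin k → E)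
    (hcs_range : Set.range qs = Set.range cs)
    (hF1id : F1 k cs c = ⨆ j, ‖cs j - c j‖)
    (i j : Fin k) (hij : i ≠ j) :
    Vcell k cs i ∩ Vcell k c j ⊆
      {x | minDist k cs * infDist x (frontier (Vcell k cs i)) ≤
        2 * ‖x - qs x‖ * F1 k cs c + 2 * F1 k cs c ^ 2} := by
  rintro x ⟨hxi, hxj⟩
  set δ := F1 k cs c
  have hδ : ∀ l, ‖cs l - c l‖ ≤ δ := fun l =>
    hF1id ▸ le_ciSup (f := fun l => ‖cs l - c l‖) (Finite.bddAbove_range _) l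
  have hδ0 : 0 ≤ δ := (norm_nonneg _).trans (hδ i)
  have hfar := norm_sub_le_norm_sub_add_of_mem_Vcell hδ hxj i
  have hnear : ‖x - cs i‖ ≤ ‖x - qs x‖ := by
    obtain ⟨l, hl⟩ : qs x ∈ Set.range cs := hcs_range ▸ mem_range_self x
    exact hl ▸ hxi l
  have hbisect := two_mul_norm_sub_mul_infDist_frontier_le (t := Vcell k cs i) (b := cs j)
    (fun y hy => hy j) hxi
  have hfar_sq := pow_le_pow_left₀ (norm_nonneg _) hfar 2
  calc minDist k cs * infDist x (frontier (Vcell k cs i))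
      ≤ ‖cs j - cs i‖ * infDist x (frontier (Vcell k cs i)) :=
        mul_le_mul_of_nonneg_right (minDist_le_norm_sub cs hij.symm) infDist_nonneg
    _ ≤ 2 * ‖x - cs i‖ * δ + 2 * δ ^ 2 := by nlinarith
    _ ≤ 2 * ‖x - qs x‖ * δ + 2 * δ ^ 2 := by gcongr

/-- the key inclusion in the proof of Proposition `thm:pstar`: misclassified cells
lie in an inflated neighborhood of the boundary of the optimal Voronoi cells. -/
theorem stmt19 [BorelSpace E] [CompleteSpace E] [SecondCountableTopology E]
    (P : Measure E) [IsProbabilityMeasure P] (k : ℕ) (hk : 1 ≤ k)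
    (hmom : Integrable (fun x => ‖x‖ ^ 2) P)
    (hsupp : ∀ s : Finset E, s.card ≤ k → P (↑s : Set E) < 1)
    (qs q : E → E) (cs c : Fin k → E)
    (hcs_inj : Function.Injective cs) (hc_inj : Function.Injective c)
    (hcs_range : Set.range qs = Set.range cs) (hc_range : Set.range q = Set.range c)
    (hqs : IsOptimalQuantizer P k qs) (hq : IsNNQuantizer k q)
    (hF1id : F1 k cs c = ⨆ j, ‖cs j - c j‖)
    (i j : Fin k) (hij : i ≠ j) :
    Vcell k cs i ∩ Vcell k c j ⊆
      {x | minDist k cs * infDist x (frontier (Vcell k cs i)) ≤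
        2 * ‖x - qs x‖ * F1 k cs c + 2 * F1 k cs c ^ 2} :=
  stmt19_general k qs cs c hcs_range hF1id i j hij
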